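/- Fix u > 0, a > 0 and b > 0, and for λ ∈ (0,1) and δ > −1 set s_λ(δ) := D(δ)/√K(δ), where D(δ) := 1 − λ + λ a (1+δ) and K(δ) := u(1 − λ + λ b²(1+δ)²) + (1 − λ + λ a²(1+δ)²) − D(δ)². Then λ^{-1} · (∂²/∂δ²) s_λ(δ) |_{δ=0} → −(a² + b² u)/u^{3/2} as λ → 0⁺. In particular, there exists λ₀ ∈ (0,1) such that for every λ ∈ (0,λ₀) the second derivative of δ ↦ s_λ(δ) at δ = 0 is strictly negative, i.e., the Sharpe ratio is locally concave in the allocation change δ at δ = 0. -/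

import Mathlib

/-!
In δ the Sharpe ratio is `(α + βδ)/√(p + qδ + rδ²)` with `β = λa`, `q = O(λ)`, `r = O(λ)` and
`p = K(0) > 0`, and the second derivative of such a quotient at `0` is
`(3αq² - 4p(βq + αr)) / (4p^(5/2))`. Every term of the numerator carries a factor `λ`, so
`λ⁻¹ s_λ''(0)` is a continuous function of `λ` near `0`; at `λ = 0` we have `α = 1`, `p = u`,
`r/λ = ub² + a²`, which gives the limit `-(a² + b²u)/u^(3/2) < 0`.
-/

open Filter Topology Set

theorem HasDerivAt.div_sqrt {f g : ℝ → ℝ} {f' g' x : ℝ} (hf : HasDerivAt f f' x)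
    (hg : HasDerivAt g g' x) (hgx : 0 < g x) :
    HasDerivAt (fun y => f y / √(g y)) ((f' * g x - f x * g' / 2) / √(g x ^ 3)) x := by
  have hsqrt : 0 < √(g x) := Real.sqrt_pos.mpr hgx
  have hcube : √(g x ^ 3) = g x * √(g x) := by
    rw [pow_succ, Real.sqrt_mul' _ hgx.le, Real.sqrt_sq hgx.le]
  refine (hf.div (hg.sqrt hgx.ne') hsqrt.ne').congr_deriv ?_
  rw [hcube]
  field_simp
  rw [Real.sq_sqrt hgx.le]
  ring

theorem iteratedDeriv_two_affine_div_sqrt_quadratic_zero {α β p q r : ℝ} (hp : 0 < p) :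
    iteratedDeriv 2 (fun x => (α + β * x) / √(p + q * x + r * x ^ 2)) 0
      = (3 * α * q ^ 2 - 4 * p * (β * q + α * r)) / (4 * p ^ 2 * √p) := by
  set g : ℝ → ℝ := fun x => p + q * x + r * x ^ 2
  have hg (x : ℝ) : HasDerivAt g (q + 2 * r * x) x := by
    refine (((hasDerivAt_id x).const_mul q |>.const_add p).add
      ((hasDerivAt_pow 2 x).const_mul r)).congr_deriv ?_
    simp only [mul_one, Nat.cast_ofNat, Nat.add_one_sub_one, pow_one, add_right_inj]
    ring
  have hf (x : ℝ) : HasDerivAt (fun x => α + β * x) β x := by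
    simpa using ((hasDerivAt_id x).const_mul β).const_add α
  set N : ℝ → ℝ := fun x => β * g x - (α + β * x) * (q + 2 * r * x) / 2
  have hN : HasDerivAt N (β * q / 2 - α * r) 0 := by
    refine (((hg 0).const_mul β).sub (((hf 0).mul
      (((hasDerivAt_id 0).const_mul (2 * r)).const_add q)).div_const 2)).congr_deriv ?_
    simp only [mul_zero, add_zero, id_eq, mul_one]
    ring
  have hg_pos : ∀ᶠ x in 𝓝 0, 0 < g x :=
    (show Continuous g by fun_prop).continuousAt.eventually (lt_mem_nhds (by simpa [g]))
  -- writing the first derivative over `√(g³)` lets `HasDerivAt.div_sqrt` differentiate it again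
  have hderiv : deriv (fun x => (α + β * x) / √(g x)) =ᶠ[𝓝 0] fun x => N x / √(g x ^ 3) :=
    hg_pos.mono fun x hx => ((hf x).div_sqrt (hg x) hx).deriv
  have h2 := hN.div_sqrt ((hg 0).fun_pow 3) (by simpa [g] using pow_pos hp 3)
  rw [iteratedDeriv_succ, iteratedDeriv_one, hderiv.deriv_eq, h2.deriv]
  have hsqrt : √(p ^ 9) = p ^ 4 * √p := by
    rw [show 9 = 4 * 2 + 1 by rfl, pow_succ, pow_mul, Real.sqrt_mul' _ hp.le,
      Real.sqrt_sq (by positivity)]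
  simp only [N, g]
  norm_num [← pow_mul, hsqrt]
  have : 0 < √p := Real.sqrt_pos.mpr hp
  field_simp
  ring

namespace Sharpe

variable (u a b lam : ℝ)

def varianceAtZero : ℝ := u * (1 - lam + lam * b ^ 2) + lam * (1 - lam) * (1 - a) ^ 2

def slope : ℝ := 2 * (u * b ^ 2 + (1 - lam) * a * (a - 1))

def curvature : ℝ := u * b ^ 2 + (1 - lam) * a ^ 2

noncomputable def scaledSecondDeriv : ℝ :=
  (3 * (1 - lam + lam * a) * lam * slope u a b lam ^ 2
      - 4 * varianceAtZero u a b lam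
        * (lam * a * slope u a b lam + (1 - lam + lam * a) * curvature u a b lam))
    / (4 * varianceAtZero u a b lam ^ 2 * √(varianceAtZero u a b lam))

variable {u a b lam}

theorem variance_eq_quadratic (δ : ℝ) :
    u * (1 - lam + lam * b ^ 2 * (1 + δ) ^ 2) + (1 - lam + lam * a ^ 2 * (1 + δ) ^ 2)
        - (1 - lam + lam * a * (1 + δ)) ^ 2
      = varianceAtZero u a b lam + lam * slope u a b lam * δ
        + lam * curvature u a b lam * δ ^ 2 := by
  unfold varianceAtZero slope curvature
  ring

theorem varianceAtZero_pos (hu : 0 < u) (hlam₀ : 0 ≤ lam) (hlam₁ : lam < 1) :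
    0 < varianceAtZero u a b lam := by
  unfold varianceAtZero
  have : 0 < 1 - lam := by linarith
  positivity

theorem iteratedDeriv_two_eq_mul_scaledSecondDeriv (hu : 0 < u) (hlam₀ : 0 ≤ lam)
    (hlam₁ : lam < 1) :
    iteratedDeriv 2 (fun δ => (1 - lam + lam * a * (1 + δ)) /
        √(u * (1 - lam + lam * b ^ 2 * (1 + δ) ^ 2)
          + (1 - lam + lam * a ^ 2 * (1 + δ) ^ 2) - (1 - lam + lam * a * (1 + δ)) ^ 2)) 0
      = lam * scaledSecondDeriv u a b lam := by
  have hmean (δ : ℝ) : 1 - lam + lam * a * (1 + δ) = (1 - lam + lam * a) + lam * a * δ := by ring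
  simp only [variance_eq_quadratic]
  simp only [hmean]
  rw [iteratedDeriv_two_affine_div_sqrt_quadratic_zero (varianceAtZero_pos hu hlam₀ hlam₁),
    scaledSecondDeriv]
  ring

theorem continuousAt_scaledSecondDeriv (hu : 0 < u) :
    ContinuousAt (scaledSecondDeriv u a b) 0 := by
  have hpos : 0 < varianceAtZero u a b 0 := varianceAtZero_pos hu le_rfl one_pos
  have : 0 < √(varianceAtZero u a b 0) := Real.sqrt_pos.mpr hpos
  unfold scaledSecondDeriv
  exact ContinuousAt.div (by unfold varianceAtZero slope curvature; fun_prop)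
    (by unfold varianceAtZero; fun_prop) (by positivity)

theorem scaledSecondDeriv_zero (hu : 0 < u) :
    scaledSecondDeriv u a b 0 = -(a ^ 2 + b ^ 2 * u) / (u * √u) := by
  have : 0 < √u := Real.sqrt_pos.mpr hu
  have hvar : varianceAtZero u a b 0 = u := by simp [varianceAtZero]
  rw [scaledSecondDeriv, hvar, curvature]
  field_simp
  ring

end Sharpe

theorem sharpe_locally_concave_in_delta_general
    (u a b : ℝ) (hu : 0 < u) (ha : 0 < a)
    (S : ℝ → ℝ → ℝ)
    (hS : ∀ lam ∈ Set.Ioo (0:ℝ) 1, ∀ δ, -1 < δ →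
      S lam δ = (1 - lam + lam * a * (1 + δ)) /
        Real.sqrt (u * (1 - lam + lam * b^2 * (1+δ)^2)
          + (1 - lam + lam * a^2 * (1+δ)^2) - (1 - lam + lam * a * (1+δ))^2)) :
    Filter.Tendsto (fun lam => lam⁻¹ * iteratedDeriv 2 (S lam) 0)
      (nhdsWithin 0 (Set.Ioi (0:ℝ)))
      (nhds (-(a^2 + b^2*u) / (u * Real.sqrt u))) ∧
    ∃ lam₀ ∈ Set.Ioo (0:ℝ) 1, ∀ lam ∈ Set.Ioo (0:ℝ) lam₀,
      iteratedDeriv 2 (S lam) 0 < 0 := by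
  have hscaled : ∀ lam ∈ Ioo (0 : ℝ) 1,
      Sharpe.scaledSecondDeriv u a b lam = lam⁻¹ * iteratedDeriv 2 (S lam) 0 := by
    intro lam hlam
    have hS_near : S lam =ᶠ[𝓝 0] _ :=
      eventually_of_mem (Ioi_mem_nhds neg_one_lt_zero) (hS lam hlam)
    rw [hS_near.iteratedDeriv_eq,
      Sharpe.iteratedDeriv_two_eq_mul_scaledSecondDeriv hu hlam.1.le hlam.2,
      inv_mul_cancel_left₀ hlam.1.ne']
  have hlim : Tendsto (fun lam => lam⁻¹ * iteratedDeriv 2 (S lam) 0) (𝓝[>] 0)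
      (𝓝 (-(a ^ 2 + b ^ 2 * u) / (u * √u))) := by
    rw [← Sharpe.scaledSecondDeriv_zero hu]
    exact ((Sharpe.continuousAt_scaledSecondDeriv hu).tendsto.mono_left nhdsWithin_le_nhds).congr'
      (eventually_of_mem (Ioo_mem_nhdsGT one_pos) hscaled)
  have hneg : -(a ^ 2 + b ^ 2 * u) / (u * √u) < 0 := by
    have : 0 < √u := Real.sqrt_pos.mpr hu
    have : 0 < a ^ 2 + b ^ 2 * u := by positivity
    exact div_neg_of_neg_of_pos (neg_neg_of_pos this) (by positivity)
  obtain ⟨lam₀, ⟨hlam₀, hlam₀_le⟩, hsub⟩ := (mem_nhdsGT_iff_exists_mem_Ioc_Ioo_subset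
    one_half_pos).mp (hlim.eventually_lt_const hneg)
  refine ⟨hlim, lam₀, ⟨hlam₀, by linarith⟩, fun lam hlam => ?_⟩
  exact neg_of_mul_neg_right (hsub hlam) (inv_nonneg.mpr hlam.1.le)

/-- Local concavity of the Sharpe ratio in the allocation change δ at δ = 0:
λ⁻¹ · (∂²/∂δ²) s_λ(δ)|_{δ=0} → −(a² + b²u)/u^{3/2} as λ → 0⁺; in particular there is
λ₀ ∈ (0,1) such that for all λ ∈ (0,λ₀) the second derivative at δ = 0 is negative. -/
theorem sharpe_locally_concave_in_delta
    (u a b : ℝ) (hu : 0 < u) (ha : 0 < a) (hb : 0 < b)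
    (S : ℝ → ℝ → ℝ)
    (hS : ∀ lam ∈ Set.Ioo (0:ℝ) 1, ∀ δ, -1 < δ →
      S lam δ = (1 - lam + lam * a * (1 + δ)) /
        Real.sqrt (u * (1 - lam + lam * b^2 * (1+δ)^2)
          + (1 - lam + lam * a^2 * (1+δ)^2) - (1 - lam + lam * a * (1+δ))^2)) :
    Filter.Tendsto (fun lam => lam⁻¹ * iteratedDeriv 2 (S lam) 0)
      (nhdsWithin 0 (Set.Ioi (0:ℝ)))
      (nhds (-(a^2 + b^2*u) / (u * Real.sqrt u))) ∧
    ∃ lam₀ ∈ Set.Ioo (0:ℝ) 1, ∀ lam ∈ Set.Ioo (0:ℝ) lam₀,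
      iteratedDeriv 2 (S lam) 0 < 0 :=
  sharpe_locally_concave_in_delta_general u a b hu ha S hS
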